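/- arXiv:2312.04033 — 2 statements merged into one kernel-verified Lean document; each statement's English description precedes it below -/
import Mathlib

section
/- If R1, R2 : ℝ → ℂ are differentiable, satisfy R1' = i(E + eφ)R1 - i m R2 and R2' = -i(E + eφ)R2 + i m R1 for real-valued functions φ and real constants E, e, m, and both |R1|² and |R2|² are integrable over ℝ, then |R1(s)| = |R2(s)| for all s ∈ ℝ. -/
/-!
Along a solution, `‖R1‖² - ‖R2‖²` has derivative
`2 Re (conj R1 * R1') - 2 Re (conj R2 * R2')`: the potential terms are purely imaginary
multiples of `‖Rᵢ‖²` and the two mass terms cancel, so the difference is constant.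
A constant that is integrable over `ℝ` vanishes, hence `‖R1‖² = ‖R2‖²`.
-/

open MeasureTheory Complex

theorem eq_zero_of_hasDerivAt_zero_of_integrable {E : Type*} [NormedAddCommGroup E]
    [NormedSpace ℝ E] {f : ℝ → E} {μ : Measure ℝ} (hμ : ¬IsFiniteMeasure μ)
    (hf : ∀ s, HasDerivAt f 0 s) (hfi : Integrable f μ) (s : ℝ) : f s = 0 := by
  have hconst : f = fun _ => f s := funext fun t =>
    is_const_of_deriv_eq_zero (fun x => (hf x).differentiableAt) (fun x => (hf x).deriv) t s
  rw [hconst] at hfi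
  exact (integrable_const_iff.mp hfi).resolve_right hμ

theorem hasDerivAt_norm_sq_sub_norm_sq_of_dirac {R1 R2 : ℝ → ℂ} {a m s : ℝ}
    (h1 : HasDerivAt R1 (I * a * R1 s - I * m * R2 s) s)
    (h2 : HasDerivAt R2 (-(I * a) * R2 s + I * m * R1 s) s) :
    HasDerivAt (fun t => ‖R1 t‖ ^ 2 - ‖R2 t‖ ^ 2) 0 s := by
  refine (h1.norm_sq.sub h2.norm_sq).congr_deriv ?_
  simp only [Complex.inner, mul_re, mul_im, sub_re, sub_im, add_re, add_im, neg_re, neg_im,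
    I_re, I_im, ofReal_re, ofReal_im, conj_re, conj_im]
  ring

theorem dirac_radial_equal_moduli
    (R1 R2 : ℝ → ℂ) (φ : ℝ → ℝ) (E e m : ℝ)
    (h1 : ∀ s : ℝ, HasDerivAt R1
      (Complex.I * ((E : ℂ) + (e : ℂ) * (φ s : ℂ)) * R1 s - Complex.I * (m : ℂ) * R2 s) s)
    (h2 : ∀ s : ℝ, HasDerivAt R2
      (-(Complex.I * ((E : ℂ) + (e : ℂ) * (φ s : ℂ))) * R2 s + Complex.I * (m : ℂ) * R1 s) s)
    (hi1 : Integrable (fun s : ℝ => ‖R1 s‖ ^ 2))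
    (hi2 : Integrable (fun s : ℝ => ‖R2 s‖ ^ 2)) :
    ∀ s : ℝ, ‖R1 s‖ = ‖R2 s‖ := by
  have hderiv (s : ℝ) : HasDerivAt (fun t => ‖R1 t‖ ^ 2 - ‖R2 t‖ ^ 2) 0 s :=
    hasDerivAt_norm_sq_sub_norm_sq_of_dirac (a := E + e * φ s)
      (by push_cast; exact h1 s) (by push_cast; exact h2 s)
  intro s
  have hsq : ‖R1 s‖ ^ 2 - ‖R2 s‖ ^ 2 = 0 :=
    eq_zero_of_hasDerivAt_zero_of_integrable (not_isFiniteMeasure_iff.mpr Real.volume_univ)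
      hderiv (hi1.sub hi2) s
  exact (sq_eq_sq₀ (norm_nonneg _) (norm_nonneg _)).mp (sub_eq_zero.mp hsq)
end

section
/- Suppose u, v : ℝ → ℝ are differentiable, v satisfies v(s) → v₀ ≠ 0 as s → -∞, and u' (s) = (2 + (γ/2)e^{s})v(s) for s < 0 with γ > 0. Then u(s)/(2 v₀ s) → 1 as s → -∞; in particular |u(s)| → ∞ and v(s)/u(s) → 0 as s → -∞. -/
/-! If the derivative of `f` has a limit `L` at `-∞`, the mean value inequality on `(-∞, S]`
shows that `f s - L s` grows sublinearly, so `f s / s → L`. Here `f = u` and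
`u' = (2 + (γ/2) eˢ) v → 2 v₀`, hence `u s ~ 2 v₀ s`, which forces `|u| → ∞`
and `v / u → 0`. -/

open Filter Topology Asymptotics

theorem isLittleO_id_atBot_of_hasDerivAt_of_tendsto_zero
    {E : Type*} [NormedAddCommGroup E] [NormedSpace ℝ E] {f f' : ℝ → E}
    (hf : ∀ᶠ x in atBot, HasDerivAt f (f' x) x) (hf' : Tendsto f' atBot (𝓝 0)) :
    f =o[atBot] id := by
  rw [isLittleO_iff]
  intro c hc
  have hsmall : ∀ᶠ x in atBot, ‖f' x‖ ≤ c / 2 :=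
    hf'.norm.eventually (ge_mem_nhds (by rw [norm_zero]; positivity))
  obtain ⟨S, hS⟩ := eventually_atBot.mp (hf.and hsmall)
  have mvt : ∀ s ≤ S, ‖f s - f S‖ ≤ c / 2 * ‖s - S‖ := fun s hs =>
    convex_Iic S |>.norm_image_sub_le_of_norm_hasDerivWithin_le
      (fun x hx => (hS x hx).1.hasDerivWithinAt) (fun x hx => (hS x hx).2)
      Set.self_mem_Iic hs
  have hfar : ∀ᶠ s : ℝ in atBot, 2 * ‖f S‖ / c + ‖S‖ ≤ ‖s‖ := by
    simp only [Real.norm_eq_abs]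
    exact tendsto_abs_atBot_atTop.eventually_ge_atTop _
  filter_upwards [eventually_le_atBot S, hfar] with s hs hs_far
  have hfS : ‖f S‖ ≤ c / 2 * (‖s‖ - ‖S‖) := by
    have : 2 * ‖f S‖ / c * c = 2 * ‖f S‖ := div_mul_cancel₀ _ hc.ne'
    nlinarith
  calc ‖f s‖ ≤ ‖f S‖ + ‖f s - f S‖ := norm_le_norm_add_norm_sub' _ _
    _ ≤ ‖f S‖ + c / 2 * (‖s‖ + ‖S‖) := by
      gcongr
      exact (mvt s hs).trans (by gcongr; exact norm_sub_le _ _)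
    _ ≤ c * ‖id s‖ := by rw [id]; linarith

theorem tendsto_div_atBot_of_hasDerivAt_of_tendsto {f f' : ℝ → ℝ} {L : ℝ}
    (hf : ∀ᶠ x in atBot, HasDerivAt f (f' x) x) (hf' : Tendsto f' atBot (𝓝 L)) :
    Tendsto (fun x => f x / x) atBot (𝓝 L) := by
  have hlin : (fun x => f x - L * x) =o[atBot] id := by
    refine isLittleO_id_atBot_of_hasDerivAt_of_tendsto_zero (f' := fun x => f' x - L) ?_ ?_
    · filter_upwards [hf] with x hx
      exact hx.fun_sub (hasDerivAt_const_mul L)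
    · simpa using hf'.sub_const L
  have := hlin.tendsto_div_nhds_zero.add_const L
  rw [zero_add] at this
  refine this.congr' ?_
  filter_upwards [eventually_ne_atBot 0] with x hx
  simp only [id, sub_div, mul_div_cancel_right₀ _ hx, sub_add_cancel]

theorem linear_growth_at_minus_infinity_general
    (u v : ℝ → ℝ) (γ v₀ : ℝ) (hv₀ : v₀ ≠ 0)
    (hlim : Tendsto v atBot (nhds v₀))
    (hode : ∀ s < (0 : ℝ), HasDerivAt u ((2 + γ / 2 * Real.exp s) * v s) s) :
    Tendsto (fun s => u s / (2 * v₀ * s)) atBot (nhds 1) ∧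
    Tendsto (fun s => |u s|) atBot atTop ∧
    Tendsto (fun s => v s / u s) atBot (nhds 0) := by
  have hcoeff : Tendsto (fun s => 2 + γ / 2 * Real.exp s) atBot (𝓝 2) := by
    simpa using (Real.tendsto_exp_atBot.const_mul (γ / 2)).const_add 2
  have hslope : Tendsto (fun s => u s / s) atBot (𝓝 (2 * v₀)) :=
    tendsto_div_atBot_of_hasDerivAt_of_tendsto
      (eventually_atBot.mpr ⟨-1, fun s hs => hode s (by linarith)⟩) (hcoeff.mul hlim)
  have h2v₀ : 2 * v₀ ≠ 0 := mul_ne_zero two_ne_zero hv₀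
  have hratio : Tendsto (fun s => u s / (2 * v₀ * s)) atBot (𝓝 1) := by
    refine (div_self h2v₀ ▸ hslope.div_const (2 * v₀)).congr fun s => ?_
    rw [div_div, mul_comm s]
  have habs : Tendsto (fun s => |u s|) atBot atTop := by
    refine (hslope.abs.pos_mul_atTop (abs_pos.mpr h2v₀) tendsto_abs_atBot_atTop).congr' ?_
    filter_upwards [eventually_ne_atBot 0] with s hs
    rw [← abs_mul, div_mul_cancel₀ _ hs]
  have hinv : Tendsto (fun s => (u s)⁻¹) atBot (𝓝 0) := by
    rw [tendsto_zero_iff_abs_tendsto_zero]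
    simpa only [Function.comp_def, Pi.inv_def, abs_inv] using habs.inv_tendsto_atTop
  refine ⟨hratio, habs, ?_⟩
  simpa only [div_eq_mul_inv, mul_zero] using hlim.mul hinv

theorem linear_growth_at_minus_infinity
    (u v : ℝ → ℝ) (γ v₀ : ℝ) (hγ : 0 < γ) (hv₀ : v₀ ≠ 0)
    (hu : Differentiable ℝ u) (hv : Differentiable ℝ v)
    (hlim : Tendsto v atBot (nhds v₀))
    (hode : ∀ s < (0 : ℝ), HasDerivAt u ((2 + γ / 2 * Real.exp s) * v s) s) :
    Tendsto (fun s => u s / (2 * v₀ * s)) atBot (nhds 1) ∧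
    Tendsto (fun s => |u s|) atBot atTop ∧
    Tendsto (fun s => v s / u s) atBot (nhds 0) :=
  linear_growth_at_minus_infinity_general u v γ v₀ hv₀ hlim hode
end
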